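/- The modular automorphism is recovered from the square of the antipode and the character ε∘σ: for every a ∈ A, σ(a) = (id ⊗ (ε∘σ))(Δ(S²(a))), i.e. σ(a) = Σ S²(a)₍₁₎ · ε(σ(S²(a)₍₂₎)). (This expresses σ(a) = δ̂⁻¹ ⊳ S²(a), where δ̂⁻¹ = ε∘σ is the inverse of the modular element of the dual.) -/

import Mathlib

open TensorProduct HopfAlgebra

/-- `f ⊳ a = Σ a₍₁₎ f(a₍₂₎)` : the standard left action of a linear functional on `A`. -/
noncomputable def lAct {A : Type*} [Ring A] [HopfAlgebra ℂ A] (f : A →ₗ[ℂ] ℂ) : A →ₗ[ℂ] A :=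
  (TensorProduct.rid ℂ A).toLinearMap ∘ₗ LinearMap.lTensor A f ∘ₗ Coalgebra.comul

/-!
Strong left invariance `S((ι ⊗ φ)(Δ(a)(1 ⊗ b))) = (ι ⊗ φ)((1 ⊗ a)Δ(b))` is associativity of
convolution together with `S * id = 1`. Used twice, once on each side of `φ(a b) = φ(b σ(a))`,
it shows that `Δ(σ a)` and `(S² ⊗ σ)(Δ a)` have the same images under all slices
`ι ⊗ φ(b ·)`; faithfulness of `φ` makes these slices separate `A ⊗ A`, so
`Δ ∘ σ = (S² ⊗ σ) ∘ Δ`. Applying `ι ⊗ ε` gives `σ(a) = S²((ε∘σ) ⊳ a)`, and `S²` commutes with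
the action of the character `ε∘σ`, since `S` reverses `Δ` and characters are `S²`-invariant.
-/

open Coalgebra LinearMap WithConv

namespace HopfAlgebra

variable {R A B : Type*} [CommSemiring R] [Semiring A] [HopfAlgebra R A]

local notation "incl₁" =>
  AlgHom.toLinearMap (Algebra.TensorProduct.includeLeft (R := R) (S := R) (A := A) (B := A))
local notation "incl₂" =>
  AlgHom.toLinearMap (Algebra.TensorProduct.includeRight (R := R) (A := A) (B := A))

theorem toConv_algHom_comp_antipode_mul_self [Semiring B] [Algebra R B] (χ : A →ₐ[R] B) :
    toConv (χ.toLinearMap ∘ₗ antipode R) * toConv χ.toLinearMap = 1 := by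
  ext a
  rw [(ℛ R a).convMul_apply]
  simp [← map_mul, ← map_sum, sum_antipode_mul_eq_algebraMap_counit]

theorem algHom_comp_antipode_comp_antipode [CommSemiring B] [Algebra R B] (χ : A →ₐ[R] B) :
    χ.toLinearMap ∘ₗ antipode R ∘ₗ antipode R = χ.toLinearMap := by
  let χS : A →ₐ[R] B := .ofLinearMap (χ.toLinearMap ∘ₗ antipode R) (by simp)
    (fun x y ↦ by simp [antipode_mul_antidistrib, mul_comm])
  exact toConv_injective <| left_inv_eq_right_inv
    (toConv_algHom_comp_antipode_mul_self χS) (toConv_algHom_comp_antipode_mul_self χ)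

theorem toConv_comul_eq_includeLeft_mul_includeRight :
    toConv (comul : A →ₗ[R] A ⊗[R] A) = toConv incl₁ * toConv incl₂ := by
  ext a
  rw [(ℛ R a).convMul_apply, ← (ℛ R a).eq]
  simp

/-- `Δ(S a) = Σ S(a₍₂₎) ⊗ S(a₍₁₎)`. -/
theorem toConv_comul_comp_antipode :
    toConv (comul ∘ₗ antipode R (A := A)) =
      toConv (incl₂ ∘ₗ antipode R) * toConv (incl₁ ∘ₗ antipode R) := by
  symm
  refine left_inv_eq_right_inv (a := toConv comul) ?_ comul_right_inv
  rw [toConv_comul_eq_includeLeft_mul_includeRight, mul_assoc,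
    ← mul_assoc (toConv (incl₁ ∘ₗ antipode R)), toConv_algHom_comp_antipode_mul_self, one_mul,
    toConv_algHom_comp_antipode_mul_self]

end HopfAlgebra

namespace Coalgebra.Repr

variable {R A ι : Type*} [CommSemiring R] [Semiring A] [HopfAlgebra R A] {a : A}

noncomputable def antipode (r : Repr R a ι) : Repr R (antipode R a) ι where
  index := r.index
  left i := HopfAlgebra.antipode R (r.right i)
  right i := HopfAlgebra.antipode R (r.left i)
  eq := by
    have h := congr(ofConv $(toConv_comul_comp_antipode (R := R) (A := A)) a)
    rw [r.convMul_apply] at h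
    simp at h
    exact h.symm

end Coalgebra.Repr

namespace TensorProduct

variable {R M N P Q : Type*} [CommSemiring R] [AddCommMonoid M] [Module R M] [AddCommMonoid N]
  [Module R N] [AddCommMonoid P] [Module R P] [AddCommMonoid Q] [Module R Q]

theorem rid_lTensor_map (f : P →ₗ[R] R) (g : M →ₗ[R] Q) (h : N →ₗ[R] P) (x : M ⊗[R] N) :
    TensorProduct.rid R Q (lTensor Q f (map g h x)) =
      g (TensorProduct.rid R M (lTensor M (f ∘ₗ h) x)) := by
  induction x using TensorProduct.induction_on <;> simp_all

theorem apply_lid_rTensor (f : N →ₗ[R] R) (g : M →ₗ[R] R) (x : M ⊗[R] N) :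
    f (TensorProduct.lid R N (rTensor N g x)) = g (TensorProduct.rid R M (lTensor M f x)) := by
  induction x using TensorProduct.induction_on <;> simp_all [mul_comm]

theorem eq_of_forall_rid_lTensor_eq {K V W ι : Type*} [CommRing K] [AddCommGroup V] [Module K V]
    [Module.Free K V] [AddCommGroup W] [Module K W] (F : ι → W →ₗ[K] K)
    (hF : ∀ w, (∀ i, F i w = 0) → w = 0) {x y : V ⊗[K] W}
    (h : ∀ i, TensorProduct.rid K V (lTensor V (F i) x) =
      TensorProduct.rid K V (lTensor V (F i) y)) :
    x = y := by
  classical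
  let b := Module.Free.chooseBasis K V
  apply (equivFinsuppOfBasisLeft b).injective
  ext j
  refine sub_eq_zero.1 <| hF _ fun i ↦ ?_
  rw [map_sub, sub_eq_zero, equivFinsuppOfBasisLeft_apply, equivFinsuppOfBasisLeft_apply,
    apply_lid_rTensor, apply_lid_rTensor, h i]

end TensorProduct

section LeftIntegral

variable {A : Type*} [Ring A] [HopfAlgebra ℂ A]

theorem lAct_eq_sum {ι : Type*} {a : A} (r : Repr ℂ a ι) (f : A →ₗ[ℂ] ℂ) :
    lAct f a = ∑ i ∈ r.index, f (r.right i) • r.left i := by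
  simp [lAct, ← r.eq]

theorem lAct_counit (a : A) : lAct counit a = a := by
  simp [lAct]

theorem lAct_antipode_antipode (f : A →ₗ[ℂ] ℂ) (a : A) :
    lAct f (antipode ℂ (antipode ℂ a)) =
      antipode ℂ (antipode ℂ (lAct (f ∘ₗ antipode ℂ ∘ₗ antipode ℂ) a)) := by
  rw [lAct_eq_sum (ℛ ℂ a).antipode.antipode, lAct_eq_sum (ℛ ℂ a)]
  simp [Repr.antipode]

variable {φ : A →ₗ[ℂ] ℂ}

theorem antipode_lAct_mulRight
    (hφL : ∀ a : A, TensorProduct.rid ℂ A (lTensor A φ (comul a)) = φ a • (1 : A)) (a b : A) :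
    antipode ℂ (lAct (φ ∘ₗ mulRight ℂ b) a) = lAct (φ ∘ₗ mulLeft ℂ a) b := by
  let s := ℛ ℂ b
  let T : A →ₗ[ℂ] A := ∑ k ∈ s.index, (φ ∘ₗ mulRight ℂ (s.right k)).smulRight (s.left k)
  have hT : ∀ z, T z = lAct (φ ∘ₗ mulLeft ℂ z) b := fun z ↦ by
    simp [T, lAct_eq_sum s]
  -- left invariance of `φ`, evaluated at `y b`
  have hidT : toConv LinearMap.id * toConv T =
      toConv (Algebra.linearMap ℂ A ∘ₗ φ ∘ₗ mulRight ℂ b) := by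
    ext y
    have hyb : algebraMap ℂ A (φ (y * b)) = lAct φ (y * b) := by
      rw [Algebra.algebraMap_eq_smul_one, ← hφL]; rfl
    rw [(ℛ ℂ y).convMul_apply]
    simp [hyb, lAct_eq_sum ((ℛ ℂ y).mul s), hT, lAct_eq_sum s, Finset.sum_product,
      Finset.mul_sum]
  have hST : toConv (antipode ℂ) * toConv (Algebra.linearMap ℂ A ∘ₗ φ ∘ₗ mulRight ℂ b) =
      toConv T := by
    rw [← hidT, ← mul_assoc, antipode_mul_id, one_mul]
  have hSTa := congr(ofConv $hST a)
  rw [ofConv_toConv, hT, (ℛ ℂ a).convMul_apply] at hSTa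
  rw [← hSTa, lAct_eq_sum (ℛ ℂ a)]
  simp [← Algebra.commutes, ← Algebra.smul_def]

theorem comul_apply_modular
    (hφL : ∀ a : A, TensorProduct.rid ℂ A (lTensor A φ (comul a)) = φ a • (1 : A))
    (hφf2 : ∀ a : A, (∀ b : A, φ (b * a) = 0) → a = 0)
    (σ : A ≃ₐ[ℂ] A) (hσ : ∀ a b : A, φ (a * b) = φ (b * σ a)) (a : A) :
    comul (σ a) = map (antipode ℂ ∘ₗ antipode ℂ) σ.toLinearMap (comul a) := by
  refine eq_of_forall_rid_lTensor_eq (fun b ↦ φ ∘ₗ mulLeft ℂ b) hφf2 fun b ↦ ?_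
  have hσa : φ ∘ₗ mulRight ℂ (σ a) = φ ∘ₗ mulLeft ℂ a := by
    ext x; exact (hσ a x).symm
  have hσb : φ ∘ₗ mulLeft ℂ b ∘ₗ σ.toLinearMap = φ ∘ₗ mulRight ℂ b := by
    ext x; exact (hσ x b).symm
  calc lAct (φ ∘ₗ mulLeft ℂ b) (σ a)
      = antipode ℂ (lAct (φ ∘ₗ mulLeft ℂ a) b) := by
        rw [← hσa, antipode_lAct_mulRight hφL]
    _ = antipode ℂ (antipode ℂ (lAct (φ ∘ₗ mulLeft ℂ b ∘ₗ σ.toLinearMap) a)) := by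
        rw [hσb, antipode_lAct_mulRight hφL]
    _ = _ :=
        (rid_lTensor_map (φ ∘ₗ mulLeft ℂ b) (antipode ℂ ∘ₗ antipode ℂ) σ.toLinearMap _).symm

end LeftIntegral

theorem modular_automorphism_eq_dual_modular_action
    {A : Type*} [Ring A] [HopfAlgebra ℂ A]
    (φ : A →ₗ[ℂ] ℂ)
    (hφL : ∀ a : A,
      (TensorProduct.rid ℂ A) (LinearMap.lTensor A φ (Coalgebra.comul a)) = φ a • (1 : A))
    (hφf2 : ∀ a : A, (∀ b : A, φ (b * a) = 0) → a = 0)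
    (σ : A ≃ₐ[ℂ] A) (hσ : ∀ a b : A, φ (a * b) = φ (b * σ a)) :
    ∀ a : A,
      σ a = lAct (Coalgebra.counit ∘ₗ σ.toLinearMap)
        (antipode (R := ℂ) (antipode (R := ℂ) a)) := by
  intro a
  have hω : counit ∘ₗ σ.toLinearMap ∘ₗ antipode ℂ ∘ₗ antipode ℂ = counit ∘ₗ σ.toLinearMap :=
    algHom_comp_antipode_comp_antipode ((Bialgebra.counitAlgHom ℂ A).comp σ.toAlgHom)
  rw [lAct_antipode_antipode, comp_assoc, hω]
  calc σ a = TensorProduct.rid ℂ A (lTensor A counit (comul (σ a))) := (lAct_counit _).symm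
    _ = _ := by rw [comul_apply_modular hφL hφf2 σ hσ, rid_lTensor_map]; rfl
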